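/- arXiv:2601.14173 — 2 statements merged into one kernel-verified Lean document; each statement's English description precedes it below -/
import Mathlib

section
/- (Theorem 3.1, division-free form.) Let g : [0,1]^N → ℝ^M be a low-rank tensor-product model g(x) = Σ_{r=1}^R v_r ∏_{n=1}^N g_{n,r}(x_n), where each g_{n,r} : [0,1] → ℝ is continuously differentiable. Then the Dirichlet energy admits the closed form DE(g) = ∫_{[0,1]^N} ‖∇g(x)‖_F² dx = Σ_{r=1}^R Σ_{k=1}^R ⟨v_r, v_k⟩_{ℝ^M} Σ_{q=1}^N ⟨g'_{q,r}, g'_{q,k}⟩ ∏_{n≠q} ⟨g_{n,r}, g_{n,k}⟩, where ⟨f, h⟩ := ∫_0^1 f(x) h(x) dx. -/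
/-!
Differentiating the `q`-th factor of each rank-one term shows that `∂_q g` is again a low-rank
model, `∂_q g(x) = Σ_r (g'_{q,r}(x_q) ∏_{n≠q} g_{n,r}(x_n)) v_r`. Expanding
`‖∇g‖_F² = Σ_q ‖∂_q g‖²` bilinearly gives `Σ_{r,k} ⟨v_r, v_k⟩ Σ_q` of products of two such
separable coefficients, and by Fubini on the cube the integral of a separable function is the
product of its one-dimensional integrals.
-/

open MeasureTheory Finset

theorem setIntegral_univ_pi_prod {ι 𝕜 : Type*} [Fintype ι] [RCLike 𝕜] {E : ι → Type*}
    [∀ i, MeasureSpace (E i)] [∀ i, SigmaFinite (volume : Measure (E i))]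
    (s : (i : ι) → Set (E i)) (f : (i : ι) → E i → 𝕜) :
    ∫ x in Set.univ.pi s, ∏ i, f i (x i) = ∏ i, ∫ t in s i, f i t := by
  rw [volume_pi, Measure.restrict_pi_pi, integral_fintype_prod_eq_prod]

theorem setIntegral_univ_pi_mul_prod_erase {ι 𝕜 : Type*} [Fintype ι] [DecidableEq ι] [RCLike 𝕜]
    {E : ι → Type*} [∀ i, MeasureSpace (E i)] [∀ i, SigmaFinite (volume : Measure (E i))]
    (s : (i : ι) → Set (E i)) (f : (i : ι) → E i → 𝕜) (q : ι) (a : E q → 𝕜) :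
    ∫ x in Set.univ.pi s, a (x q) * ∏ i ∈ univ.erase q, f i (x i) =
      (∫ t in s q, a t) * ∏ i ∈ univ.erase q, ∫ t in s i, f i t := by
  have hne : ∀ i ∈ univ.erase q, ∀ t, Function.update f q a i t = f i t := fun i hi _ => by
    rw [Function.update_of_ne (ne_of_mem_erase hi)]
  have h := setIntegral_univ_pi_prod s (Function.update f q a)
  simpa +contextual only [← mul_prod_erase univ _ (mem_univ q), Function.update_self, hne] using h

theorem norm_sum_smul_sq {ι E : Type*} [NormedAddCommGroup E] [InnerProductSpace ℝ E]
    (s : Finset ι) (a : ι → ℝ) (v : ι → E) :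
    ‖∑ r ∈ s, a r • v r‖ ^ 2 = ∑ r ∈ s, ∑ k ∈ s, a r * a k * inner ℝ (v r) (v k) := by
  rw [← real_inner_self_eq_norm_sq, sum_inner]
  simp only [inner_sum, inner_smul_left, inner_smul_right, RCLike.conj_to_real]
  exact sum_congr rfl fun r _ => sum_congr rfl fun k _ => by ring

section PartialDerivProd

variable {ι : Type*} [Fintype ι] [DecidableEq ι]

noncomputable def partialDerivProd (f : ι → ℝ → ℝ) (q : ι) (x : ι → ℝ) : ℝ :=
  deriv (f q) (x q) * ∏ n ∈ univ.erase q, f n (x n)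

theorem continuous_partialDerivProd {f : ι → ℝ → ℝ} (hf : ∀ n, ContDiff ℝ 1 (f n)) (q : ι) :
    Continuous (partialDerivProd f q) :=
  (((hf q).continuous_deriv le_rfl).comp (continuous_apply q)).mul
    (continuous_finsetProd _ fun n _ => (hf n).continuous.comp (continuous_apply n))

theorem fderiv_sum_prod_smul_apply_single {ρ E : Type*} [Fintype ρ] [NormedAddCommGroup E]
    [NormedSpace ℝ E] {g : ι → ρ → ℝ → ℝ} {x : ι → ℝ}
    (hg : ∀ n r, DifferentiableAt ℝ (g n r) (x n)) (v : ρ → E) (q : ι) :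
    fderiv ℝ (fun y : ι → ℝ => ∑ r, (∏ n, g n r (y n)) • v r) x (Pi.single q 1) =
      ∑ r, partialDerivProd (fun n => g n r) q x • v r := by
  have hcoord (n : ι) (r : ρ) : HasFDerivAt (fun y : ι → ℝ => g n r (y n))
      (deriv (g n r) (x n) • (ContinuousLinearMap.proj n : (ι → ℝ) →L[ℝ] ℝ)) x :=
    (hg n r).hasDerivAt.comp_hasFDerivAt x (hasFDerivAt_apply n x)
  rw [(HasFDerivAt.fun_sum fun r _ =>
    (HasFDerivAt.finsetProd fun n _ => hcoord n r).smul_const (v r)).fderiv]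
  simp [partialDerivProd, Pi.single_apply, mul_comm]

theorem sum_sq_fderiv_sum_prod_smul_apply_single {ρ κ : Type*} [Fintype ρ] [Fintype κ]
    {g : ι → ρ → ℝ → ℝ} {x : ι → ℝ} (hg : ∀ n r, DifferentiableAt ℝ (g n r) (x n))
    (v : ρ → EuclideanSpace ℝ κ) :
    ∑ i, ∑ q, (fderiv ℝ (fun y : ι → ℝ => ∑ r, (∏ n, g n r (y n)) • v r) x (Pi.single q 1) i) ^ 2 =
      ∑ r, ∑ k, inner ℝ (v r) (v k) *
        ∑ q, partialDerivProd (fun n => g n r) q x * partialDerivProd (fun n => g n k) q x := by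
  rw [sum_comm]
  simp only [← EuclideanSpace.real_norm_sq_eq, fderiv_sum_prod_smul_apply_single hg,
    norm_sum_smul_sq, mul_sum]
  rw [sum_comm]
  refine sum_congr rfl fun r _ => ?_
  rw [sum_comm]
  exact sum_congr rfl fun k _ => sum_congr rfl fun q _ => by ring

theorem setIntegral_univ_pi_partialDerivProd_mul (s : ι → Set ℝ) (f h : ι → ℝ → ℝ) (q : ι) :
    ∫ x in Set.univ.pi s, partialDerivProd f q x * partialDerivProd h q x =
      (∫ t in s q, deriv (f q) t * deriv (h q) t) *
        ∏ n ∈ univ.erase q, ∫ t in s n, f n t * h n t := by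
  simp only [partialDerivProd, mul_mul_mul_comm, ← prod_mul_distrib]
  exact setIntegral_univ_pi_mul_prod_erase s (fun n t => f n t * h n t) q
    (fun t => deriv (f q) t * deriv (h q) t)

end PartialDerivProd

/-- Theorem 3.1 (division-free form): the Dirichlet energy of a low-rank tensor-product model
with C¹ univariate factors equals
`Σ_r Σ_k ⟨v_r, v_k⟩ Σ_q ⟨g'_{q,r}, g'_{q,k}⟩ ∏_{n≠q} ⟨g_{n,r}, g_{n,k}⟩`. -/
theorem tpbs_dirichlet_energy_closed_form (N M R : ℕ)
    (v : Fin R → EuclideanSpace ℝ (Fin M))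
    (g : Fin N → Fin R → ℝ → ℝ)
    (hg : ∀ n r, ContDiff ℝ 1 (g n r))
    (G : (Fin N → ℝ) → EuclideanSpace ℝ (Fin M))
    (hG : ∀ x, G x = ∑ r, (∏ n, g n r (x n)) • v r) :
    (∫ x in Set.univ.pi fun _ : Fin N => Set.Icc (0:ℝ) 1,
        ∑ i : Fin M, ∑ q : Fin N, (fderiv ℝ G x (Pi.single q 1) i) ^ 2) =
      ∑ r, ∑ k, (inner ℝ (v r) (v k) : ℝ) *
        ∑ q, (∫ t in (0:ℝ)..1, deriv (g q r) t * deriv (g q k) t) *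
          ∏ n ∈ Finset.univ.erase q, ∫ t in (0:ℝ)..1, g n r t * g n k t := by
  have hint (q : Fin N) (r k : Fin R) :
      IntegrableOn (fun x => partialDerivProd (g · r) q x * partialDerivProd (g · k) q x)
        (Set.univ.pi fun _ => Set.Icc 0 1) :=
    ((continuous_partialDerivProd (hg · r) q).mul (continuous_partialDerivProd (hg · k) q)
      ).continuousOn.integrableOn_compact (isCompact_univ_pi fun _ => isCompact_Icc)
  have hint_sum (r k : Fin R) := integrable_finsetSum univ fun q _ => hint q r k
  rw [funext hG]
  simp only [sum_sq_fderiv_sum_prod_smul_apply_single fun n r =>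
    (hg n r).differentiable one_ne_zero _]
  rw [integral_finsetSum _ fun r _ => integrable_finsetSum _ fun k _ => (hint_sum r k).const_mul _]
  refine sum_congr rfl fun r _ => ?_
  rw [integral_finsetSum _ fun k _ => (hint_sum r k).const_mul _]
  refine sum_congr rfl fun k _ => ?_
  rw [integral_const_mul, integral_finsetSum _ fun q _ => hint q r k]
  simp only [setIntegral_univ_pi_partialDerivProd_mul, intervalIntegral.integral_of_le zero_le_one,
    integral_Icc_eq_integral_Ioc]
end

section
/- Let g : [0,1]^N → ℝ^M be a low-rank tensor-product model g(x) = Σ_{r=1}^R v_r ∏_{n=1}^N g_{n,r}(x_n) with each g_{n,r} continuous, and let p(x) = Σ_{s=1}^S w_s ∏_{n=1}^N p_{n,s}(x_n) be a low-rank tensor-product density model with each p_{n,s} continuous. Fix 1 ≤ D < N and observed coordinates x_{D+1}, …, x_N ∈ [0,1], and assume the marginal Σ_{s=1}^S w_s ∏_{n=D+1}^N p_{n,s}(x_n) > 0. Then the conditional expectation of g given the observed coordinates admits the closed form: (∫_{[0,1]^D} g(u, x_{D+1},…,x_N) p(u, x_{D+1},…,x_N) du) / (∫_{[0,1]^D}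 p(u, x_{D+1},…,x_N) du) = (Σ_{r=1}^R Σ_{s=1}^S v_r w_s (∏_{n=D+1}^N g_{n,r}(x_n) p_{n,s}(x_n)) ∏_{d=1}^D ⟨g_{d,r}, p_{d,s}⟩) / (Σ_{t=1}^S w_t ∏_{n=D+1}^N p_{n,t}(x_n)), where ⟨f, h⟩ := ∫_0^1 f(t) h(t) dt. -/
/-!
On the slice where the observed coordinates are fixed, `P` and `P • G` are finite sums of
products of univariate functions of the unobserved coordinates, so by Fubini each box integral
factorises into one-dimensional integrals. In the denominator these are `∫ p_{d,s} = 1`, leaving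
the observed marginal; in the numerator they are the inner products `⟨g_{d,r}, p_{d,s}⟩`.
-/

open MeasureTheory Set

section ProductIntegrals

variable {ι α 𝕜 : Type*} [Fintype ι] [MeasureSpace α] [SigmaFinite (volume : Measure α)]
  [RCLike 𝕜]

theorem integrableOn_univ_pi_prod {s : ι → Set α} {f : ι → α → 𝕜}
    (hf : ∀ i, IntegrableOn (f i) (s i)) :
    IntegrableOn (fun u => ∏ i, f i (u i)) (univ.pi s) := by
  rw [IntegrableOn, volume_pi, Measure.restrict_pi_pi]
  exact .fintype_prod hf

theorem setIntegral_univ_pi_prod_s15 (s : ι → Set α) (f : ι → α → 𝕜) :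
    ∫ u in univ.pi s, ∏ i, f i (u i) = ∏ i, ∫ t in s i, f i t := by
  rw [volume_pi, Measure.restrict_pi_pi, integral_fintype_prod_eq_prod]

end ProductIntegrals

theorem setIntegral_univ_pi_Icc_sum_prod_smul {ι κ E : Type*} [Fintype ι] [Fintype κ]
    [NormedAddCommGroup E] [NormedSpace ℝ E] [CompleteSpace E] {a b : ℝ} (hab : a ≤ b)
    {f : κ → ι → ℝ → ℝ} (hf : ∀ k i, IntegrableOn (f k i) (Icc a b)) (c : κ → E) :
    ∫ u in univ.pi (fun _ => Icc a b), ∑ k, (∏ i, f k i (u i)) • c k =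
      ∑ k, (∏ i, ∫ t in a..b, f k i t) • c k := by
  rw [integral_finsetSum _ fun k _ => (integrableOn_univ_pi_prod (hf k)).smul_const (c k)]
  simp only [integral_smul_const, setIntegral_univ_pi_prod_s15, intervalIntegral.integral_of_le hab,
    integral_Icc_eq_integral_Ioc]

namespace Fin

variable {M : Type*} [CommMonoid M] {D N : ℕ}

theorem prod_filter_val_lt (h : D ≤ N) (f : Fin N → M) :
    ∏ n ∈ Finset.univ.filter (fun n : Fin N => (n : ℕ) < D), f n =
      ∏ d : Fin D, f (castLE h d) := by
  have : Finset.univ.filter (fun n : Fin N => (n : ℕ) < D) = Finset.univ.map (castLEEmb h) := by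
    ext n
    simp only [Finset.mem_filter, Finset.mem_univ, true_and, Finset.mem_map, castLEEmb_apply]
    exact ⟨fun hn => ⟨⟨n, hn⟩, rfl⟩, by rintro ⟨d, rfl⟩; exact d.2⟩
  rw [this, Finset.prod_map]
  rfl

theorem prod_dite_val_lt {α : Type*} (hDN : D ≤ N) (F : Fin N → α → M) (u : Fin D → α)
    (x : Fin N → α) :
    ∏ n, F n (if h : (n : ℕ) < D then u ⟨n, h⟩ else x n) =
      (∏ d, F (castLE hDN d) (u d)) *
        ∏ n ∈ Finset.univ.filter (fun n : Fin N => D ≤ (n : ℕ)), F n (x n) := by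
  rw [← Finset.prod_filter_mul_prod_filter_not Finset.univ (fun n : Fin N => (n : ℕ) < D),
    prod_filter_val_lt hDN]
  simp only [not_lt]
  congr 1
  · exact Finset.prod_congr rfl fun d _ => by simp
  · exact Finset.prod_congr rfl fun n hn => by simp [not_lt.2 (Finset.mem_filter.1 hn).2]

end Fin

theorem tpbs_conditional_expectation_closed_form_general (N M R S D : ℕ)
    (hDN : D < N)
    (v : Fin R → EuclideanSpace ℝ (Fin M))
    (g : Fin N → Fin R → ℝ → ℝ) (hg : ∀ n r, Continuous (g n r))
    (w : Fin S → ℝ)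
    (p : Fin N → Fin S → ℝ → ℝ) (hpc : ∀ n s, Continuous (p n s))
    (hp1 : ∀ n s, ∫ t in (0:ℝ)..1, p n s t = 1)
    (G : (Fin N → ℝ) → EuclideanSpace ℝ (Fin M))
    (hG : ∀ x, G x = ∑ r, (∏ n, g n r (x n)) • v r)
    (P : (Fin N → ℝ) → ℝ)
    (hP : ∀ x, P x = ∑ s, w s * ∏ n, p n s (x n))
    (x : Fin N → ℝ) :
    (∫ u in Set.univ.pi fun _ : Fin D => Set.Icc (0:ℝ) 1,
          P (fun n : Fin N => if h : (n : ℕ) < D then u ⟨n, h⟩ else x n) ∂volume)⁻¹ •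
        (∫ u in Set.univ.pi fun _ : Fin D => Set.Icc (0:ℝ) 1,
          P (fun n : Fin N => if h : (n : ℕ) < D then u ⟨n, h⟩ else x n) •
            G fun n : Fin N => if h : (n : ℕ) < D then u ⟨n, h⟩ else x n) =
      (∑ t, w t *
          ∏ n ∈ Finset.univ.filter fun n : Fin N => D ≤ (n : ℕ), p n t (x n))⁻¹ •
        ∑ r, ∑ s, (w s *
          (∏ n ∈ Finset.univ.filter fun n : Fin N => D ≤ (n : ℕ),
            g n r (x n) * p n s (x n)) *
          ∏ d ∈ Finset.univ.filter fun n : Fin N => (n : ℕ) < D,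
            ∫ t in (0:ℝ)..1, g d r t * p d s t) • v r := by
  set obs := Finset.univ.filter fun n : Fin N => D ≤ (n : ℕ)
  set e := Fin.castLE hDN.le
  have hP_slice : ∀ u : Fin D → ℝ, P (fun n => if h : (n : ℕ) < D then u ⟨n, h⟩ else x n) =
      ∑ s, (∏ d, p (e d) s (u d)) • (w s * ∏ n ∈ obs, p n s (x n)) := fun u => by
    simp only [hP, Fin.prod_dite_val_lt hDN.le, smul_eq_mul, obs, e]
    exact Finset.sum_congr rfl fun s _ => by ring
  have hPG_slice : ∀ u : Fin D → ℝ,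
      P (fun n => if h : (n : ℕ) < D then u ⟨n, h⟩ else x n) •
      G (fun n => if h : (n : ℕ) < D then u ⟨n, h⟩ else x n) =
      ∑ k : Fin R × Fin S, (∏ d, g (e d) k.1 (u d) * p (e d) k.2 (u d)) •
        ((w k.2 * ∏ n ∈ obs, g n k.1 (x n) * p n k.2 (x n)) • v k.1) := fun u => by
    rw [hG, Finset.smul_sum, Fintype.sum_prod_type]
    refine Finset.sum_congr rfl fun r _ => ?_
    rw [smul_smul, hP, Finset.sum_mul, Finset.sum_smul]
    refine Finset.sum_congr rfl fun s _ => ?_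
    simp only [smul_smul, Fin.prod_dite_val_lt hDN.le, Finset.prod_mul_distrib, obs, e]
    congr 1
    ring
  simp_rw [hPG_slice, hP_slice]
  rw [setIntegral_univ_pi_Icc_sum_prod_smul zero_le_one fun s d => (hpc (e d) s).integrableOn_Icc,
    setIntegral_univ_pi_Icc_sum_prod_smul
      (f := fun (k : Fin R × Fin S) d t => g (e d) k.1 t * p (e d) k.2 t) zero_le_one
      fun k d => ((hg (e d) k.1).mul (hpc (e d) k.2)).integrableOn_Icc]
  simp only [hp1, Finset.prod_const_one, one_smul, Fintype.sum_prod_type, smul_smul,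
    Fin.prod_filter_val_lt hDN.le, e]
  congr 1
  exact Finset.sum_congr rfl fun r _ => Finset.sum_congr rfl fun s _ => by rw [mul_comm, mul_assoc]

/-- Closed form of the conditional-expectation estimator for inference from incomplete
observations: for a low-rank tensor-product model `g` and a low-rank tensor-product density
`p`, with the first `D` coordinates unobserved and the marginal of the observed coordinates
positive, the conditional expectation of `g` given the observed coordinates equals
`(Σ_r Σ_s v_r w_s (∏_{n>D} g_{n,r}(x_n) p_{n,s}(x_n)) ∏_{d≤D} ⟨g_{d,r}, p_{d,s}⟩) /
 (Σ_t w_t ∏_{n>D} p_{n,t}(x_n))`. -/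
theorem tpbs_conditional_expectation_closed_form (N M R S D : ℕ)
    (hD1 : 1 ≤ D) (hDN : D < N)
    (v : Fin R → EuclideanSpace ℝ (Fin M))
    (g : Fin N → Fin R → ℝ → ℝ) (hg : ∀ n r, Continuous (g n r))
    (w : Fin S → ℝ) (hw0 : ∀ s, 0 ≤ w s) (hw1 : ∑ s, w s = 1)
    (p : Fin N → Fin S → ℝ → ℝ) (hpc : ∀ n s, Continuous (p n s))
    (hp0 : ∀ n s, ∀ t ∈ Set.Icc (0:ℝ) 1, 0 ≤ p n s t)
    (hp1 : ∀ n s, ∫ t in (0:ℝ)..1, p n s t = 1)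
    (G : (Fin N → ℝ) → EuclideanSpace ℝ (Fin M))
    (hG : ∀ x, G x = ∑ r, (∏ n, g n r (x n)) • v r)
    (P : (Fin N → ℝ) → ℝ)
    (hP : ∀ x, P x = ∑ s, w s * ∏ n, p n s (x n))
    (x : Fin N → ℝ) (hx : ∀ n : Fin N, D ≤ (n : ℕ) → x n ∈ Set.Icc (0:ℝ) 1)
    (hpos : 0 < ∑ s, w s *
        ∏ n ∈ Finset.univ.filter fun n : Fin N => D ≤ (n : ℕ), p n s (x n)) :
    (∫ u in Set.univ.pi fun _ : Fin D => Set.Icc (0:ℝ) 1,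
          P (fun n : Fin N => if h : (n : ℕ) < D then u ⟨n, h⟩ else x n) ∂volume)⁻¹ •
        (∫ u in Set.univ.pi fun _ : Fin D => Set.Icc (0:ℝ) 1,
          P (fun n : Fin N => if h : (n : ℕ) < D then u ⟨n, h⟩ else x n) •
            G fun n : Fin N => if h : (n : ℕ) < D then u ⟨n, h⟩ else x n) =
      (∑ t, w t *
          ∏ n ∈ Finset.univ.filter fun n : Fin N => D ≤ (n : ℕ), p n t (x n))⁻¹ •
        ∑ r, ∑ s, (w s *
          (∏ n ∈ Finset.univ.filter fun n : Fin N => D ≤ (n : ℕ),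
            g n r (x n) * p n s (x n)) *
          ∏ d ∈ Finset.univ.filter fun n : Fin N => (n : ℕ) < D,
            ∫ t in (0:ℝ)..1, g d r t * p d s t) • v r :=
  tpbs_conditional_expectation_closed_form_general N M R S D hDN v g hg w p hpc hp1 G hG P hP x
end
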